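/- arXiv:1704.01015 — 5 statements merged into one kernel-verified Lean document; each statement's English description precedes it below -/
import Mathlib

section
/- For j ≥ 1 and τ > 0, the scalar function ψ(τ) = φ_j(τz) satisfies the differential equation ψ'(τ) = (z − j/τ)ψ(τ) + 1/((j−1)! τ). -/
/-- The φ-functions of exponential integrators defined by the integral
representation `φ_j(w) = ∫_0^1 e^{(1−θ)w} θ^{j−1}/(j−1)! dθ` (for `j ≥ 1`). -/
noncomputable def phiInt (j : ℕ) (z : ℂ) : ℂ :=
  ∫ θ in (0:ℝ)..1,
    Complex.exp ((1 - (θ:ℂ)) * z) * (θ:ℂ) ^ (j - 1) / (Nat.factorial (j - 1) : ℂ)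

/-!
Substituting `s = θ t` in the integral gives, for real `t ≠ 0`,
`φ_{k+1}(t z) = e^{t z} t^{-(k+1)} ∫_0^t e^{-s z} s^k / k! ds`,
a product of three factors whose derivatives are explicit (the middle one by the fundamental
theorem of calculus). The product rule then yields the differential equation.
-/

open Complex

noncomputable def phiIntegrand (k : ℕ) (z : ℂ) (s : ℝ) : ℂ :=
  exp (-(s * z)) * (s : ℂ) ^ k / k.factorial

theorem continuous_phiIntegrand (k : ℕ) (z : ℂ) : Continuous (phiIntegrand k z) := by
  unfold phiIntegrand
  fun_prop

theorem phiInt_succ_ofReal_mul (k : ℕ) (z : ℂ) {t : ℝ} (ht : t ≠ 0) :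
    phiInt (k + 1) (t * z) =
      exp (t * z) * (∫ s in (0 : ℝ)..t, phiIntegrand k z s) / (t : ℂ) ^ (k + 1) := by
  have htc : (t : ℂ) ≠ 0 := ofReal_ne_zero.mpr ht
  set f : ℝ → ℂ := fun s => exp (t * z) * phiIntegrand k z s / (t : ℂ) ^ k
  calc phiInt (k + 1) (t * z) = ∫ θ in (0 : ℝ)..1, f (θ * t) := by
        refine intervalIntegral.integral_congr fun θ _ => ?_
        have hexp : exp ((1 - θ) * (t * z)) = exp (t * z) * exp (-((θ * t : ℝ) * z)) := by
          rw [← exp_add]; push_cast; ring_nf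
        simp only [f, phiIntegrand, Nat.add_sub_cancel, hexp]
        push_cast
        field_simp
        ring
    _ = (t : ℂ)⁻¹ * ∫ s in (0 : ℝ)..t, f s := by
        rw [intervalIntegral.integral_comp_mul_right f ht, zero_mul, one_mul, real_smul,
          ofReal_inv]
    _ = _ := by
        simp only [f, intervalIntegral.integral_div, intervalIntegral.integral_const_mul]
        field_simp
        ring

theorem hasDerivAt_phiInt_succ_ofReal_mul (k : ℕ) (z : ℂ) {τ : ℝ} (hτ : τ ≠ 0) :
    HasDerivAt (fun t : ℝ => phiInt (k + 1) (t * z))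
      ((z - (k + 1) / τ) * phiInt (k + 1) (τ * z) + 1 / (k.factorial * τ)) τ := by
  have hτc : (τ : ℂ) ≠ 0 := ofReal_ne_zero.mpr hτ
  have hexp : HasDerivAt (fun t : ℝ => exp (t * z)) (exp (τ * z) * z) τ :=
    ((hasDerivAt_mul_const z).cexp (x := (τ : ℂ))).comp_ofReal
  have hprimitive : HasDerivAt (fun t => ∫ s in (0 : ℝ)..t, phiIntegrand k z s)
      (phiIntegrand k z τ) τ :=
    ((continuous_phiIntegrand k z).integral_hasStrictDerivAt 0 τ).hasDerivAt
  have hpow : HasDerivAt (fun t : ℝ => (t : ℂ) ^ (k + 1)) ((k + 1 : ℕ) * (τ : ℂ) ^ k) τ :=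
    (hasDerivAt_pow (k + 1) (τ : ℂ)).comp_ofReal
  have hphi : (fun t : ℝ => phiInt (k + 1) (t * z)) =ᶠ[nhds τ]
      fun t => exp (t * z) * (∫ s in (0 : ℝ)..t, phiIntegrand k z s) / (t : ℂ) ^ (k + 1) := by
    filter_upwards [eventually_ne_nhds hτ] with t ht
    exact phiInt_succ_ofReal_mul k z ht
  refine (((hexp.mul hprimitive).div hpow (pow_ne_zero _ hτc)).congr_of_eventuallyEq hphi
    ).congr_deriv ?_
  rw [phiInt_succ_ofReal_mul k z hτ, phiIntegrand, exp_neg]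
  have hfac : (k.factorial : ℂ) ≠ 0 := Nat.cast_ne_zero.mpr k.factorial_ne_zero
  simp only [Pi.mul_apply]
  field_simp
  push_cast
  ring

/-- Scalar version of Lemma 4.1: for `j ≥ 1`, `τ > 0` and fixed `z ∈ ℂ`, the function
`ψ(τ) = φ_j(τz)` satisfies `ψ'(τ) = (z − j/τ)ψ(τ) + 1/((j−1)! τ)`. -/
theorem hasDerivAt_phiInt (j : ℕ) (hj : 1 ≤ j) (z : ℂ) (τ : ℝ) (hτ : 0 < τ) :
    HasDerivAt (fun t : ℝ => phiInt j ((t:ℂ) * z))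
      ((z - (j:ℂ)/(τ:ℂ)) * phiInt j ((τ:ℂ) * z) + 1 / ((Nat.factorial (j-1) : ℂ) * (τ:ℂ)))
      τ := by
  obtain ⟨k, rfl⟩ : ∃ k, j = k + 1 := ⟨j - 1, by omega⟩
  simpa using hasDerivAt_phiInt_succ_ofReal_mul k z hτ.ne'
end

section
/- Let c_1,...,c_s be distinct nodes whose interpolatory quadrature rule on [0,1] is exact for polynomials of degree ≤ p−1, and write l_i(θ) = Σ_{l=1}^s a_{i,l} θ^{l−1}/(l−1)!. Then for all integers m, r with 1 ≤ m ≤ p and 0 ≤ r ≤ m−1: (1/r!) Σ_{l=1}^s (Σ_{i=1}^s c_i^r a_{i,l})/(m−r−1+l)! = 1/m!. -/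
open Finset

lemma beta_nat (n k : ℕ) :
    (∫ θ in (0:ℝ)..1, θ ^ n * (1 - θ) ^ k) =
      (n.factorial : ℝ) * k.factorial / (n + k + 1).factorial := by
  induction k generalizing n with
  | zero =>
    simp only [pow_zero, mul_one, integral_pow, Nat.factorial, Nat.add_zero, Nat.cast_one]
    rw [one_pow, zero_pow (by omega)]
    push_cast [Nat.succ_eq_add_one]
    have h : (n:ℝ) + 1 ≠ 0 := by positivity
    have h2 : (n.factorial : ℝ) ≠ 0 := by positivity
    field_simp
    norm_num
  | succ k ih =>
    have key := intervalIntegral.integral_mul_deriv_eq_deriv_mul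
      (u := fun θ : ℝ => (1 - θ) ^ (k+1)) (v := fun θ : ℝ => θ ^ (n+1) / (n+1))
      (u' := fun θ : ℝ => -((k:ℝ)+1) * (1 - θ) ^ k) (v' := fun θ : ℝ => θ ^ n)
      (a := 0) (b := 1)
      (fun x _ => by
        have h1 : HasDerivAt (fun θ : ℝ => 1 - θ) (-1) x := by
          simpa using (hasDerivAt_id x).const_sub 1
        have := h1.pow (k+1)
        convert this using 1
        · ext θ; simp
        · rw [Nat.add_sub_cancel]; push_cast; ring)
      (fun x _ => by
        have := (hasDerivAt_pow (n+1) x).div_const ((n:ℝ)+1)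
        convert this using 1
        have : (n:ℝ) + 1 ≠ 0 := by positivity
        push_cast
        field_simp)
      (by apply Continuous.intervalIntegrable; continuity)
      (by apply Continuous.intervalIntegrable; continuity)
    simp only [one_pow, sub_self, zero_pow (Nat.succ_ne_zero k), zero_mul, zero_div, mul_zero,
      zero_pow (Nat.succ_ne_zero n), sub_zero, zero_sub] at key
    have e1 : (∫ θ in (0:ℝ)..1, θ ^ n * (1 - θ) ^ (k+1))
        = ∫ θ in (0:ℝ)..1, (1 - θ) ^ (k+1) * θ ^ n := by
      congr 1; ext θ; ring
    rw [e1, key]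
    have e2 : (∫ θ in (0:ℝ)..1, -((k:ℝ)+1) * (1 - θ) ^ k * (θ ^ (n+1) / (n+1)))
        = (-((k:ℝ)+1) / ((n:ℝ)+1)) * ∫ θ in (0:ℝ)..1, θ ^ (n+1) * (1 - θ) ^ k := by
      rw [← intervalIntegral.integral_const_mul]
      congr 1; ext θ; ring
    rw [e2, ih (n+1)]
    have h3 : (n:ℝ) + 1 ≠ 0 := by positivity
    rw [show n + (k+1) + 1 = (n + 1 + k + 1) by ring]
    have h4 : ((n+1+k+1).factorial : ℝ) ≠ 0 := by positivity
    rw [Nat.factorial_succ (n), Nat.factorial_succ k]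
    push_cast
    field_simp


/-- Key identity in the proof of Theorem 4.5: if the interpolatory quadrature rule
based on the distinct nodes `c₁,…,c_s` (with Lagrange coefficients
`l_i(θ) = Σ_{l=1}^s a_{i,l} θ^{l−1}/(l−1)!`) is exact on `[0,1]` for polynomials of
degree ≤ p−1, then for all `1 ≤ m ≤ p` and `0 ≤ r ≤ m−1`:
`(1/r!) Σ_{l=1}^s (Σ_{i=1}^s c_i^r a_{i,l})/(m−r−1+l)! = 1/m!`. -/
theorem quadrature_key_identity (s p : ℕ) (c : Fin s → ℝ) (hc : Function.Injective c)
    (a : Fin s → Fin s → ℝ)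
    (ha : ∀ i (θ : ℝ),
      (∏ j ∈ univ.filter (· ≠ i), (θ - c j) / (c i - c j)) =
        ∑ l : Fin s, a i l * θ ^ (l : ℕ) / (Nat.factorial l : ℝ))
    (hq : ∀ m : ℕ, m ≤ p - 1 →
      (∫ θ in (0:ℝ)..1, θ ^ m) =
        ∑ i : Fin s,
          (∫ θ in (0:ℝ)..1, ∏ j ∈ univ.filter (· ≠ i), (θ - c j) / (c i - c j)) * c i ^ m)
    (m r : ℕ) (hm1 : 1 ≤ m) (hmp : m ≤ p) (hr : r < m) :
    (1 / (Nat.factorial r : ℝ)) *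
        ∑ l : Fin s,
          (∑ i : Fin s, c i ^ r * a i l) / (Nat.factorial (m - r + (l : ℕ)) : ℝ) =
      1 / (Nat.factorial m : ℝ) := by
  classical
  set k := m - r with hk
  have hk1 : 1 ≤ k := by omega
  have hrk : r + k = m := by omega
  -- Lagrange polynomials
  set li : Fin s → Polynomial ℝ :=
    fun i => ∑ l : Fin s, Polynomial.C (a i l / (l:ℕ).factorial) * Polynomial.X ^ (l:ℕ) with hli
  have hli_eval : ∀ i (θ : ℝ), (li i).eval θ =
      ∏ j ∈ univ.filter (· ≠ i), (θ - c j) / (c i - c j) := by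
    intro i θ
    rw [ha i θ]
    simp only [hli, Polynomial.eval_finset_sum, Polynomial.eval_mul, Polynomial.eval_C,
      Polynomial.eval_pow, Polynomial.eval_X]
    exact Finset.sum_congr rfl fun l _ => by ring
  have hdelta : ∀ i j, (li i).eval (c j) = if j = i then 1 else 0 := by
    intro i j
    rw [hli_eval]
    by_cases hji : j = i
    · subst hji
      rw [if_pos rfl]
      apply Finset.prod_eq_one
      intro x hx
      rw [Finset.mem_filter] at hx
      have : c j - c x ≠ 0 := sub_ne_zero.2 fun h => hx.2 (hc h.symm)
      exact div_self this
    · rw [if_neg hji]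
      apply Finset.prod_eq_zero (i := j)
      · simp [Finset.mem_filter, hji]
      · simp
  set L : Polynomial ℝ := ∑ i : Fin s, Polynomial.C (c i ^ r) * li i with hL
  set D : Polynomial ℝ := Polynomial.X ^ r - L with hD
  have hDroot : ∀ j, D.eval (c j) = 0 := by
    intro j
    simp only [hD, Polynomial.eval_sub, Polynomial.eval_pow, Polynomial.eval_X, hL,
      Polynomial.eval_finset_sum, Polynomial.eval_mul, Polynomial.eval_C, hdelta,
      mul_ite, mul_one, mul_zero, Finset.sum_ite_eq, Finset.mem_univ, if_true, sub_self]
  -- degree bounds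
  have hlideg : ∀ i, (li i).natDegree ≤ s - 1 := by
    intro i
    apply Polynomial.natDegree_sum_le_of_forall_le
    intro l _
    refine (Polynomial.natDegree_C_mul_le _ _).trans ?_
    rw [Polynomial.natDegree_X_pow]
    omega
  have hLdeg : L.natDegree ≤ s - 1 := by
    apply Polynomial.natDegree_sum_le_of_forall_le
    intro i _
    exact (Polynomial.natDegree_C_mul_le _ _).trans (hlideg i)
  have hDdeg : D.natDegree ≤ max r (s - 1) := by
    refine (Polynomial.natDegree_sub_le _ _).trans ?_
    rw [Polynomial.natDegree_X_pow]
    exact max_le_max le_rfl hLdeg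
  -- the key vanishing integral
  have hint : (∫ θ in (0:ℝ)..1, ((1 - Polynomial.X) ^ (k-1) * D).eval θ) = 0 := by
    by_cases hrs : r < s
    · have hD0 : D = 0 := by
        apply Polynomial.eq_zero_of_natDegree_lt_card_of_eval_eq_zero D hc hDroot
        rw [Fintype.card_fin]
        omega
      simp [hD0]
    · -- quadrature argument
      set g : Polynomial ℝ := (1 - Polynomial.X) ^ (k-1) * D with hg
      have h1X : (1 - Polynomial.X : Polynomial ℝ).natDegree = 1 := by
        rw [show (1 - Polynomial.X : Polynomial ℝ) = -(Polynomial.X - Polynomial.C 1) by simp,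
          Polynomial.natDegree_neg, Polynomial.natDegree_X_sub_C]
      have hgdeg : g.natDegree < m := by
        have := Polynomial.natDegree_mul_le (p := (1 - Polynomial.X : Polynomial ℝ) ^ (k-1)) (q := D)
        have h2 := (Polynomial.natDegree_pow_le (p := (1 - Polynomial.X : Polynomial ℝ)) (n := k-1))
        rw [h1X] at h2
        have : g.natDegree ≤ (k-1) * 1 + max r (s-1) := by
          refine Polynomial.natDegree_mul_le.trans (add_le_add (h2.trans ?_) hDdeg)
          omega
        omega
      have hgroot : ∀ j, g.eval (c j) = 0 := by
        intro j; rw [hg, Polynomial.eval_mul, hDroot, mul_zero]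
      have hgev : ∀ θ : ℝ, g.eval θ = ∑ n ∈ range m, g.coeff n * θ ^ n :=
        fun θ => Polynomial.eval_eq_sum_range' hgdeg θ
      have hq' : ∀ n, n < m → (∫ θ in (0:ℝ)..1, θ ^ n) =
          ∑ i : Fin s,
            (∫ θ in (0:ℝ)..1, ∏ j ∈ univ.filter (· ≠ i), (θ - c j) / (c i - c j)) * c i ^ n :=
        fun n hn => hq n (by omega)
      calc (∫ θ in (0:ℝ)..1, g.eval θ)
          = ∫ θ in (0:ℝ)..1, ∑ n ∈ range m, g.coeff n * θ ^ n := by simp only [hgev]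
        _ = ∑ n ∈ range m, ∫ θ in (0:ℝ)..1, g.coeff n * θ ^ n := by
            apply intervalIntegral.integral_finset_sum
            intro n _
            exact ((continuous_const.mul (continuous_pow n)).intervalIntegrable 0 1)
        _ = ∑ n ∈ range m, g.coeff n * ∫ θ in (0:ℝ)..1, θ ^ n := by
            simp only [intervalIntegral.integral_const_mul]
        _ = ∑ n ∈ range m, g.coeff n * ∑ i : Fin s,
              (∫ θ in (0:ℝ)..1, ∏ j ∈ univ.filter (· ≠ i), (θ - c j) / (c i - c j)) * c i ^ n := by
            refine Finset.sum_congr rfl fun n hn => ?_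
            rw [hq' n (Finset.mem_range.mp hn)]
        _ = ∑ i : Fin s,
              (∫ θ in (0:ℝ)..1, ∏ j ∈ univ.filter (· ≠ i), (θ - c j) / (c i - c j)) *
                g.eval (c i) := by
            simp only [Finset.mul_sum]
            rw [Finset.sum_comm]
            refine Finset.sum_congr rfl fun i _ => ?_
            rw [hgev (c i), Finset.mul_sum]
            exact Finset.sum_congr rfl fun n _ => by ring
        _ = 0 := by simp [hgroot]
  -- rewrite the vanishing integral as difference of two integrals
  have hint' : (∫ θ in (0:ℝ)..1, (1-θ)^(k-1) * (θ^r - L.eval θ)) = 0 := by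
    rw [← hint]
    congr 1
    ext θ
    simp only [hD, Polynomial.eval_mul, Polynomial.eval_pow, Polynomial.eval_sub,
      Polynomial.eval_one, Polynomial.eval_X]
  have contL : Continuous fun θ : ℝ => Polynomial.eval θ L := L.continuous
  have cont1 : Continuous fun θ : ℝ => (1-θ)^(k-1) :=
    (continuous_const.sub continuous_id).pow _
  have hintL : (∫ θ in (0:ℝ)..1, (1-θ)^(k-1) * θ^r)
      = ∫ θ in (0:ℝ)..1, (1-θ)^(k-1) * L.eval θ := by
    have i1 : IntervalIntegrable (fun θ : ℝ => (1-θ)^(k-1) * θ^r) MeasureTheory.volume 0 1 :=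
      (cont1.mul (continuous_pow r)).intervalIntegrable 0 1
    have i2 : IntervalIntegrable (fun θ : ℝ => (1-θ)^(k-1) * L.eval θ) MeasureTheory.volume 0 1 :=
      (cont1.mul contL).intervalIntegrable 0 1
    apply sub_eq_zero.mp
    rw [← intervalIntegral.integral_sub i1 i2, ← hint']
    congr 1
    ext θ
    ring
  -- compute both sides via the Beta integral
  have e1 : (∫ θ in (0:ℝ)..1, (1-θ)^(k-1) * θ^r)
      = (r.factorial : ℝ) * (k-1).factorial / m.factorial := by
    rw [show (∫ θ in (0:ℝ)..1, (1-θ)^(k-1) * θ^r)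
        = ∫ θ in (0:ℝ)..1, θ^r * (1-θ)^(k-1) by congr 1; ext θ; ring]
    rw [beta_nat r (k-1), show r + (k-1) + 1 = m by omega]
  have hLev : ∀ θ : ℝ, L.eval θ =
      ∑ l : Fin s, ((∑ i : Fin s, c i ^ r * a i l) / ((l:ℕ).factorial : ℝ)) * θ ^ (l:ℕ) := by
    intro θ
    simp only [hL, Polynomial.eval_finset_sum, Polynomial.eval_mul, Polynomial.eval_C, hli,
      Polynomial.eval_pow, Polynomial.eval_X, Finset.mul_sum]
    rw [Finset.sum_comm]
    refine Finset.sum_congr rfl fun l _ => ?_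
    rw [Finset.sum_div, Finset.sum_mul]
    exact Finset.sum_congr rfl fun i _ => by ring
  have e2 : (∫ θ in (0:ℝ)..1, (1-θ)^(k-1) * L.eval θ)
      = ∑ l : Fin s, ((∑ i : Fin s, c i ^ r * a i l) / ((l:ℕ).factorial : ℝ)) *
          (((l:ℕ).factorial : ℝ) * (k-1).factorial / ((l:ℕ) + (k-1) + 1).factorial) := by
    calc (∫ θ in (0:ℝ)..1, (1-θ)^(k-1) * L.eval θ)
        = ∫ θ in (0:ℝ)..1, ∑ l : Fin s,
            ((∑ i : Fin s, c i ^ r * a i l) / ((l:ℕ).factorial : ℝ)) *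
              (θ ^ (l:ℕ) * (1-θ)^(k-1)) := by
          congr 1
          ext θ
          rw [hLev θ, Finset.mul_sum]
          exact Finset.sum_congr rfl fun l _ => by ring
      _ = ∑ l : Fin s, ∫ θ in (0:ℝ)..1,
            ((∑ i : Fin s, c i ^ r * a i l) / ((l:ℕ).factorial : ℝ)) *
              (θ ^ (l:ℕ) * (1-θ)^(k-1)) := by
          apply intervalIntegral.integral_finset_sum
          intro l _
          exact ((continuous_const.mul ((continuous_pow _).mul cont1)).intervalIntegrable 0 1)
      _ = ∑ l : Fin s, ((∑ i : Fin s, c i ^ r * a i l) / ((l:ℕ).factorial : ℝ)) *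
            (((l:ℕ).factorial : ℝ) * (k-1).factorial / ((l:ℕ) + (k-1) + 1).factorial) := by
          refine Finset.sum_congr rfl fun l _ => ?_
          rw [intervalIntegral.integral_const_mul, beta_nat]
  -- put everything together
  have hKne : (((k-1).factorial : ℝ)) ≠ 0 := by positivity
  have hrne : ((r.factorial : ℝ)) ≠ 0 := by positivity
  have hmne : ((m.factorial : ℝ)) ≠ 0 := by positivity
  have e3 : (∑ l : Fin s, ((∑ i : Fin s, c i ^ r * a i l) / ((l:ℕ).factorial : ℝ)) *
          (((l:ℕ).factorial : ℝ) * (k-1).factorial / ((l:ℕ) + (k-1) + 1).factorial))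
      = ((k-1).factorial : ℝ) *
          ∑ l : Fin s, (∑ i : Fin s, c i ^ r * a i l) / ((k + (l:ℕ)).factorial : ℝ) := by
    rw [Finset.mul_sum]
    refine Finset.sum_congr rfl fun l _ => ?_
    rw [show (l:ℕ) + (k-1) + 1 = k + (l:ℕ) by omega]
    have hl : (((l:ℕ).factorial : ℝ)) ≠ 0 := by positivity
    have hlk : (((k + (l:ℕ)).factorial : ℝ)) ≠ 0 := by positivity
    field_simp
  rw [e1, e2, e3] at hintL
  have hT : (∑ l : Fin s, (∑ i : Fin s, c i ^ r * a i l) / ((k + (l:ℕ)).factorial : ℝ))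
      = (r.factorial : ℝ) / m.factorial :=
    mul_left_cancel₀ hKne (by rw [← hintL]; ring)
  rw [hT]
  field_simp
end

section
/- Let A_0 generate a C_0-semigroup on a Banach space X, let p ≥ 1, and let α ∈ D(A^{p}) where A extends A_0. For j ≥ 1 define v_j(τ) = Σ_{l=0}^{p−1} (τ^l/(l+j)!) A^l α + τ^p φ_{p+j}(τA_0) A^p α. Then v_j satisfies v_j'(τ) = (A − j/τ) v_j(τ) + (1/((j−1)! τ)) α for τ > 0, and v_j(0) = α/j!. -/
/-!
Put `x = A^p α`, `n = p + j - 1`, `k(t) = t^n / n!` and `F(τ) = ∫₀^τ k(τ - u) S(u) x du`, so that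
`τ^p φ_{p+j}(τA₀) x = τ^{-j} F(τ)`. Then `w(τ) = τ^j v_j(τ)` is a Taylor polynomial in the
`A^l α` plus `F`, and the equation for `v_j` is equivalent to `w' = A w + τ^{j-1}/(j-1)! α`.

Duhamel's principle gives `F' = A F + k(τ) x`. Since `A` need not be closed it cannot be moved
under the integral; instead `A F(τ)` is the derivative at `0` of `s ↦ S(s) F(τ)`, and the semigroup
law gives `S(s) F(τ) = F(τ + s) - ∫₀^s k(τ + s - r) S(r) x dr` for `s ≥ 0`. Both terms are
differentiated by the Leibniz rule. The forcing term `k(τ) x` is the top Taylor coefficient, and the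
Taylor polynomial telescopes to `τ^{j-1}/(j-1)! α`.
-/

open Finset

/-- `φ_k(τA₀)x = (1/τ^k) ∫_0^τ e^{(τ−σ)A₀} σ^{k−1}/(k−1)! x dσ`, expressed through the
semigroup `S t = e^{tA₀}`. -/
noncomputable def phiOp {X : Type*} [NormedAddCommGroup X] [NormedSpace ℝ X]
    (S : ℝ → X →L[ℝ] X) (k : ℕ) (τ : ℝ) (x : X) : X :=
  (1 / τ ^ k) • ∫ σ in (0:ℝ)..τ, (σ ^ (k-1) / (Nat.factorial (k-1) : ℝ)) • S (τ - σ) x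

open intervalIntegral Filter Topology Set Function Metric Asymptotics

section Leibniz

variable {E : Type*} [NormedAddCommGroup E] [NormedSpace ℝ E] {f f' : ℝ → ℝ → E}

theorem hasDerivAt_integral_from_self [CompleteSpace E] (hf : Continuous (uncurry f)) (t₀ : ℝ) :
    HasDerivAt (fun t => ∫ u in t₀..t, f t u) (f t₀ t₀) t₀ := by
  rw [hasDerivAt_iff_isLittleO, isLittleO_iff]
  intro ε hε
  obtain ⟨δ, hδ, hclose⟩ := Metric.continuousAt_iff.1 (hf.continuousAt (x := (t₀, t₀))) ε hε
  filter_upwards [ball_mem_nhds t₀ hδ] with t ht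
  rw [integral_same, sub_zero, ← integral_const,
    ← integral_sub ((hf.uncurry_left t).intervalIntegrable _ _) intervalIntegrable_const,
    Real.norm_eq_abs]
  refine norm_integral_le_of_norm_le_const (f := fun u => f t u - f t₀ t₀) fun u hu => ?_
  have hu : |u - t₀| ≤ |t - t₀| := abs_sub_left_of_mem_uIcc (uIoc_subset_uIcc hu)
  rw [← dist_eq_norm]
  refine (hclose (x := (t, u)) ?_).le
  rw [Prod.dist_eq, max_lt_iff]
  exact ⟨ht, lt_of_le_of_lt (by simpa [Real.dist_eq] using hu) ht⟩

theorem hasDerivAt_integral_of_continuous_partial (hf : Continuous (uncurry f))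
    (hf' : Continuous (uncurry f')) (hderiv : ∀ t u, HasDerivAt (fun t => f t u) (f' t u) t)
    (a b t₀ : ℝ) :
    HasDerivAt (fun t => ∫ u in a..b, f t u) (∫ u in a..b, f' t₀ u) t₀ := by
  obtain ⟨C, hC⟩ := ((isCompact_closedBall t₀ 1).prod isCompact_uIcc).exists_bound_of_continuousOn
    (hf'.continuousOn (s := closedBall t₀ 1 ×ˢ uIcc a b))
  exact (hasDerivAt_integral_of_dominated_loc_of_deriv_le (bound := fun _ => C)
    (closedBall_mem_nhds t₀ one_pos)
    (Eventually.of_forall fun t => (hf.uncurry_left t).aestronglyMeasurable)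
    ((hf.uncurry_left t₀).intervalIntegrable _ _) (hf'.uncurry_left t₀).aestronglyMeasurable
    (Eventually.of_forall fun u hu t ht => hC (t, u) ⟨ht, uIoc_subset_uIcc hu⟩)
    intervalIntegrable_const (Eventually.of_forall fun u _ t _ => hderiv t u)).2

theorem hasDerivAt_integral_upper_of_continuous_partial [CompleteSpace E]
    (hf : Continuous (uncurry f)) (hf' : Continuous (uncurry f'))
    (hderiv : ∀ t u, HasDerivAt (fun t => f t u) (f' t u) t) (a t₀ : ℝ) :
    HasDerivAt (fun t => ∫ u in a..t, f t u) ((∫ u in a..t₀, f' t₀ u) + f t₀ t₀) t₀ := by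
  have hsplit : (fun t => ∫ u in a..t, f t u) =
      fun t => (∫ u in a..t₀, f t u) + ∫ u in t₀..t, f t u := by
    ext t
    exact (integral_add_adjacent_intervals ((hf.uncurry_left t).intervalIntegrable _ _)
      ((hf.uncurry_left t).intervalIntegrable _ _)).symm
  rw [hsplit]
  exact (hasDerivAt_integral_of_continuous_partial hf hf' hderiv a t₀ t₀).add
    (hasDerivAt_integral_from_self hf t₀)

end Leibniz

theorem hasDerivAt_pow_succ_div_factorial (m : ℕ) (t : ℝ) :
    HasDerivAt (fun t : ℝ => t ^ (m + 1) / (m + 1).factorial) (t ^ m / m.factorial) t := by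
  refine ((hasDerivAt_pow (m + 1) t).div_const _).congr_deriv ?_
  rw [Nat.factorial_succ, Nat.add_sub_cancel]
  push_cast
  field_simp

theorem hasDerivAt_inv_pow_smul {E : Type*} [NormedAddCommGroup E] [NormedSpace ℝ E]
    {A : E →ₗ[ℝ] E} {w : ℝ → E} {f : E} {τ : ℝ} (hτ : τ ≠ 0) (j : ℕ)
    (hw : HasDerivAt w (A (w τ) + f) τ) :
    HasDerivAt (fun t => (t ^ j)⁻¹ • w t)
      (A ((τ ^ j)⁻¹ • w τ) - ((j : ℝ) / τ) • (τ ^ j)⁻¹ • w τ + (τ ^ j)⁻¹ • f) τ := by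
  have hscalar : -((j : ℝ) * τ ^ (j - 1)) / (τ ^ j) ^ 2 = -((j : ℝ) / τ * (τ ^ j)⁻¹) := by
    rcases j with _ | j
    · simp
    · rw [Nat.add_sub_cancel]
      field_simp
      ring
  refine (((hasDerivAt_pow j τ).inv (pow_ne_zero j hτ)).smul hw).congr_deriv ?_
  rw [Pi.inv_apply, hscalar, map_smul, smul_add, smul_smul, neg_smul]
  abel

section Semigroup

variable {X : Type*} [NormedAddCommGroup X] [NormedSpace ℝ X] {S : ℝ → X →L[ℝ] X}
  {A : X →ₗ[ℝ] X}

theorem generator_apply_eq_of_hasDerivAt {y d : X} {g : ℝ → X}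
    (hA : HasDerivAt (fun s => S s y) (A y) 0) (hg : HasDerivAt g d 0)
    (hSg : ∀ s, 0 ≤ s → S s y = g s) : A y = d :=
  (uniqueDiffOn_Ici 0 0 self_mem_Ici).eq_deriv _ hA.hasDerivWithinAt
    (hg.hasDerivWithinAt.congr (fun s hs => hSg s hs) (hSg 0 le_rfl))

noncomputable def semigroupConv (S : ℝ → X →L[ℝ] X) (k : ℝ → ℝ) (x : X) (t : ℝ) : X :=
  ∫ u in (0:ℝ)..t, k (t - u) • S u x

theorem phiOp_succ (S : ℝ → X →L[ℝ] X) (n : ℕ) (t : ℝ) (x : X) :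
    phiOp S (n + 1) t x = (1 / t ^ (n + 1)) •
      semigroupConv S (fun s => s ^ n / n.factorial) x t := by
  have hsub := integral_comp_sub_left (fun u => ((t - u) ^ n / n.factorial) • S u x)
    (a := 0) (b := t) t
  simp only [sub_sub_cancel, sub_self, sub_zero] at hsub
  rw [phiOp, semigroupConv, Nat.add_sub_cancel, hsub]

theorem taylor_add_smul_phiOp_eq (A : X →ₗ[ℝ] X) (p j : ℕ) (α : X) {t : ℝ} (ht : t ≠ 0) :
    (∑ l ∈ range p, (t ^ l / ((l + (j + 1)).factorial : ℝ)) • (A ^ l) α) +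
        t ^ p • phiOp S (p + (j + 1)) t ((A ^ p) α) =
      (t ^ (j + 1))⁻¹ • ((∑ l ∈ range p, (t ^ (l + j + 1) / ((l + j + 1).factorial : ℝ)) •
        (A ^ l) α) + semigroupConv S (fun s => s ^ (p + j) / (p + j).factorial) ((A ^ p) α) t) := by
  simp only [← add_assoc, phiOp_succ, smul_add, smul_sum, smul_smul]
  congr 1
  · refine sum_congr rfl fun l _ => ?_
    congr 1
    field_simp
    ring
  · congr 1
    field_simp
    ring

variable [CompleteSpace X] (hSadd : ∀ a b : ℝ, 0 ≤ a → 0 ≤ b → S (a + b) = S a ∘L S b)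
  (hScont : ∀ x : X, Continuous fun t => S t x)
include hSadd hScont

theorem semigroup_apply_semigroupConv {k : ℝ → ℝ} (hk : Continuous k) (x : X) {τ s : ℝ}
    (hτ : 0 ≤ τ) (hs : 0 ≤ s) :
    S s (semigroupConv S k x τ) =
      semigroupConv S k x (τ + s) - ∫ r in (0:ℝ)..s, k (τ + s - r) • S r x := by
  have hcont : ∀ c, Continuous fun r => k (c - r) • S r x :=
    fun c => (hk.comp (continuous_const.sub continuous_id)).smul (hScont x)
  rw [semigroupConv, semigroupConv, integral_interval_sub_left
      ((hcont _).intervalIntegrable _ _) ((hcont _).intervalIntegrable _ _),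
    ← ContinuousLinearMap.intervalIntegral_comp_comm _ ((hcont τ).intervalIntegrable _ _)]
  have hshift : ∀ u ∈ uIcc 0 τ, S s (k (τ - u) • S u x) = k (τ + s - (u + s)) • S (u + s) x := by
    intro u hu
    rw [uIcc_of_le hτ] at hu
    rw [map_smul, add_sub_add_right_eq_sub, add_comm u s, hSadd s u hs hu.1]
    rfl
  rw [integral_congr hshift, integral_comp_add_right (fun r => k (τ + s - r) • S r x), zero_add]

theorem hasDerivAt_semigroupConv (hS0 : S 0 = 1) (hA : ∀ x, HasDerivAt (fun s => S s x) (A x) 0)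
    {k k' : ℝ → ℝ} (hk : ∀ t, HasDerivAt k (k' t) t) (hk' : Continuous k') (x : X) {τ : ℝ}
    (hτ : 0 ≤ τ) :
    HasDerivAt (semigroupConv S k x) (A (semigroupConv S k x τ) + k τ • x) τ := by
  have hkc : Continuous k := continuous_iff_continuousAt.2 fun t => (hk t).continuousAt
  have hkernel : ∀ {c : ℝ → ℝ} {g : ℝ × ℝ → ℝ}, Continuous c → Continuous g →
      Continuous fun p : ℝ × ℝ => c (g p) • S p.2 x :=
    fun hc hg => (hc.comp hg).smul ((hScont x).comp continuous_snd)
  obtain ⟨D, hD⟩ : ∃ D, HasDerivAt (semigroupConv S k x) D τ :=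
    ⟨_, hasDerivAt_integral_upper_of_continuous_partial (f := fun t u => k (t - u) • S u x)
      (f' := fun t u => k' (t - u) • S u x)
      (hkernel hkc (g := fun p => p.1 - p.2) (by fun_prop))
      (hkernel hk' (g := fun p => p.1 - p.2) (by fun_prop))
      (fun t u => ((hk (t - u)).comp_sub_const t u).smul_const (S u x)) 0 τ⟩
  have hR : HasDerivAt (fun s => ∫ r in (0:ℝ)..s, k (τ + s - r) • S r x) (k τ • x) 0 := by
    simpa [hS0] using hasDerivAt_integral_from_self (f := fun s r => k (τ + s - r) • S r x)
      (hkernel hkc (g := fun p => τ + p.1 - p.2) (by fun_prop)) 0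
  have hAD : A (semigroupConv S k x τ) = D - k τ • x :=
    generator_apply_eq_of_hasDerivAt (hA _)
      (((add_zero τ).symm ▸ hD).comp_const_add τ 0 |>.sub hR)
      fun s hs => semigroup_apply_semigroupConv hSadd hScont hkc x hτ hs
  rwa [hAD, sub_add_cancel]

theorem hasDerivAt_taylor_add_semigroupConv (hS0 : S 0 = 1)
    (hA : ∀ x, HasDerivAt (fun s => S s x) (A x) 0) (p j : ℕ) (α : X) {τ : ℝ} (hτ : 0 ≤ τ) :
    HasDerivAt (fun t : ℝ =>
        (∑ l ∈ range p, (t ^ (l + j + 1) / ((l + j + 1).factorial : ℝ)) • (A ^ l) α) +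
          semigroupConv S (fun s => s ^ (p + j) / (p + j).factorial) ((A ^ p) α) t)
      (A ((∑ l ∈ range p, (τ ^ (l + j + 1) / (l + j + 1).factorial) • (A ^ l) α) +
        semigroupConv S (fun s => s ^ (p + j) / (p + j).factorial) ((A ^ p) α) τ) +
        (τ ^ j / j.factorial) • α) τ := by
  set e : ℕ → X := fun l => (τ ^ (l + j) / (l + j).factorial) • (A ^ l) α
  have hpoly : HasDerivAt
      (fun t : ℝ => ∑ l ∈ range p, (t ^ (l + j + 1) / ((l + j + 1).factorial : ℝ)) • (A ^ l) α)
      (∑ l ∈ range p, e l) τ :=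
    HasDerivAt.fun_sum fun l _ =>
      (hasDerivAt_pow_succ_div_factorial (l + j) τ).smul_const ((A ^ l) α)
  have hconv := hasDerivAt_semigroupConv hSadd hScont hS0 hA
    (fun t => (hasDerivAt_pow (p + j) t).div_const ((p + j).factorial : ℝ)) (by fun_prop)
    ((A ^ p) α) hτ
  have hApoly : A (∑ l ∈ range p, (τ ^ (l + j + 1) / (l + j + 1).factorial) • (A ^ l) α) =
      ∑ l ∈ range p, e (l + 1) := by
    rw [map_sum]
    refine sum_congr rfl fun l _ => ?_
    rw [map_smul, ← Module.End.mul_apply, ← pow_succ', Nat.add_right_comm]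
  have htelescope : ∑ l ∈ range p, e l + e p = ∑ l ∈ range p, e (l + 1) + e 0 := by
    rw [← sum_range_succ, sum_range_succ']
  have he0 : e 0 = (τ ^ j / j.factorial) • α := by simp [e]
  refine (hpoly.add hconv).congr_deriv ?_
  rw [map_add, hApoly, ← he0]
  calc _ = (∑ l ∈ range p, e l + e p) + A (semigroupConv S _ ((A ^ p) α) τ) := by abel
    _ = _ := by rw [htelescope]; abel

end Semigroup

/-- Lemma 4.2 (interior equation): let `A₀` generate a `C₀`-semigroup `S` on a Banach
space `X`, let `A` extend `A₀`, `p ≥ 1`, `j ≥ 1`, and `α ∈ D(A^p)`.  Then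
`v_j(τ) = Σ_{l=0}^{p−1} (τ^l/(l+j)!) A^l α + τ^p φ_{p+j}(τA₀) A^p α` satisfies
`v_j'(τ) = (A − j/τ) v_j(τ) + (1/((j−1)! τ)) α` for `τ > 0`, and `v_j(0) = α/j!`. -/
theorem vj_solves_ivp {X : Type*} [NormedAddCommGroup X] [NormedSpace ℝ X]
    [CompleteSpace X]
    (S : ℝ → X →L[ℝ] X) (hS0 : S 0 = 1)
    (hSadd : ∀ a b : ℝ, 0 ≤ a → 0 ≤ b → S (a + b) = S a ∘L S b)
    (hScont : ∀ x : X, Continuous fun t => S t x)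
    (A : X →ₗ[ℝ] X)
    (hgen : ∀ (x : X) (t : ℝ), 0 ≤ t → HasDerivAt (fun r => S r x) (A (S t x)) t)
    (p j : ℕ) (hp : 1 ≤ p) (hj : 1 ≤ j) (α : X) :
    let v : ℝ → X := fun τ =>
      (∑ l ∈ range p, (τ ^ l / (Nat.factorial (l + j) : ℝ)) • (A ^ l) α) +
        τ ^ p • phiOp S (p + j) τ ((A ^ p) α)
    v 0 = (1 / (Nat.factorial j : ℝ)) • α ∧
      ∀ τ : ℝ, 0 < τ →
        HasDerivAt v
          (A (v τ) - ((j : ℝ) / τ) • v τ + (1 / ((Nat.factorial (j-1) : ℝ) * τ)) • α) τ := by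
  obtain ⟨p, rfl⟩ : ∃ q, p = q + 1 := ⟨p - 1, by omega⟩
  obtain ⟨j, rfl⟩ : ∃ i, j = i + 1 := ⟨j - 1, by omega⟩
  intro v
  refine ⟨by simp [v, sum_range_succ'], fun τ hτ => ?_⟩
  have hA : ∀ x, HasDerivAt (fun s => S s x) (A x) 0 := fun x => by
    simpa [hS0] using hgen x 0 le_rfl
  have hvw : v =ᶠ[𝓝 τ] _ := (eventually_ne_nhds hτ.ne').mono fun t ht =>
    taylor_add_smul_phiOp_eq (S := S) A (p + 1) j α ht
  have hw := hasDerivAt_taylor_add_semigroupConv hSadd hScont hS0 hA (p + 1) j α hτ.le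
  rw [hvw.self_of_nhds]
  refine ((hasDerivAt_inv_pow_smul hτ.ne' (j + 1) hw).congr_of_eventuallyEq hvw).congr_deriv ?_
  have hscalar : (τ ^ (j + 1))⁻¹ * (τ ^ j / j.factorial) = 1 / (j.factorial * τ) := by
    field_simp
    ring
  rw [Nat.add_sub_cancel, ← hscalar, mul_smul]
end

section
/- Let x_0 < x_1 < ... < x_J be the Gauss–Lobatto nodes on an interval with quadrature weights α_j > 0, and let L_j be the Lagrange basis polynomials of degree J at these nodes. Then for interior indices i, j ∈ {1,...,J−1}, α_i L_j''(x_i) = α_j L_i''(x_j). -/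
open Finset Polynomial

lemma poly_integral_derivative (P : Polynomial ℝ) (a b : ℝ) :
    (∫ t in a..b, (derivative P).eval t) = P.eval b - P.eval a := by
  apply intervalIntegral.integral_eq_sub_of_hasDerivAt
  · intro t _; exact P.hasDerivAt t
  · exact ((derivative P).continuous_aeval).intervalIntegrable _ _

lemma poly_integral_add (P Q : Polynomial ℝ) (a b : ℝ) :
    (∫ t in a..b, (P + Q).eval t) =
      (∫ t in a..b, P.eval t) + (∫ t in a..b, Q.eval t) := by
  simp only [eval_add]
  exact intervalIntegral.integral_add (P.continuous_aeval.intervalIntegrable _ _)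
    (Q.continuous_aeval.intervalIntegrable _ _)

/-- Integration by parts: if `Q` vanishes at the endpoints,
`∫ (P'' Q) = -∫ (P' Q')`. -/
lemma poly_ibp (P Q : Polynomial ℝ) (a b : ℝ) (ha : Q.eval a = 0) (hb : Q.eval b = 0) :
    (∫ t in a..b, ((derivative (derivative P)) * Q).eval t) =
      - ∫ t in a..b, ((derivative P) * (derivative Q)).eval t := by
  have h := poly_integral_derivative (derivative P * Q) a b
  rw [derivative_mul, poly_integral_add] at h
  simp [ha, hb] at h
  simp only [eval_mul]
  linarith

/-- Symmetry relation for the Gauss–Lobatto collocation second-derivative entries: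
if `x₀ < x₁ < … < x_J` are nodes with positive weights `α_j` whose quadrature rule on
`[x₀, x_J]` is exact for polynomials of degree ≤ 2J−1, and `L_j` are the Lagrange
basis polynomials at these nodes, then for interior indices `i, j`:
`α_i L_j''(x_i) = α_j L_i''(x_j)`. -/
theorem gauss_lobatto_symmetry (J : ℕ) (hJ : 1 ≤ J)
    (x : Fin (J+1) → ℝ) (hx : StrictMono x)
    (α : Fin (J+1) → ℝ) (hα : ∀ k, 0 < α k)
    (hexact : ∀ P : Polynomial ℝ, P.natDegree ≤ 2*J - 1 →
      (∫ t in (x 0)..(x (Fin.last J)), P.eval t) = ∑ k : Fin (J+1), α k * P.eval (x k))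
    (i j : Fin (J+1)) (hi0 : i ≠ 0) (hiJ : i ≠ Fin.last J)
    (hj0 : j ≠ 0) (hjJ : j ≠ Fin.last J) :
    α i * (derivative (derivative (Lagrange.basis univ x j))).eval (x i) =
      α j * (derivative (derivative (Lagrange.basis univ x i))).eval (x j) := by
  have hinj : Set.InjOn x (univ : Finset (Fin (J+1))) := Set.injOn_of_injective hx.injective
  set Li := Lagrange.basis univ x i with hLi
  set Lj := Lagrange.basis univ x j with hLj
  -- degrees
  have hdegLi : Li.natDegree = J := by
    rw [hLi, Lagrange.natDegree_basis hinj (mem_univ i)]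
    simp
  have hdegLj : Lj.natDegree = J := by
    rw [hLj, Lagrange.natDegree_basis hinj (mem_univ j)]
    simp
  have hdeg : ∀ P Q : Polynomial ℝ, P.natDegree = J → Q.natDegree = J →
      ((derivative (derivative P)) * Q).natDegree ≤ 2*J - 1 := by
    intro P Q hP hQ
    calc ((derivative (derivative P)) * Q).natDegree
        ≤ (derivative (derivative P)).natDegree + Q.natDegree := natDegree_mul_le
      _ ≤ (P.natDegree - 1 - 1) + Q.natDegree := by
          gcongr
          exact le_trans (natDegree_derivative_le _) (by
            have := natDegree_derivative_le P; omega)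
      _ ≤ 2*J - 1 := by rw [hP, hQ]; omega
  -- quadrature evaluations
  have hquad : ∀ (P : Polynomial ℝ) (k : Fin (J+1)) (hk0 : k ≠ 0) (hkJ : k ≠ Fin.last J),
      P.natDegree = J →
      (∫ t in (x 0)..(x (Fin.last J)),
          ((derivative (derivative P)) * (Lagrange.basis univ x k)).eval t) =
        α k * (derivative (derivative P)).eval (x k) := by
    intro P k hk0 hkJ hP
    rw [hexact _ (hdeg _ _ hP (by rw [Lagrange.natDegree_basis hinj (mem_univ k)]; simp))]
    rw [Finset.sum_eq_single k]
    · rw [eval_mul, Lagrange.eval_basis_self hinj (mem_univ k), mul_one]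
    · intro b _ hb
      rw [eval_mul, Lagrange.eval_basis_of_ne (Ne.symm hb) (mem_univ b), mul_zero, mul_zero]
    · intro h; exact absurd (mem_univ k) h
  -- endpoint vanishing
  have hvanish : ∀ (k : Fin (J+1)) (m : Fin (J+1)), k ≠ m →
      (Lagrange.basis univ x k).eval (x m) = 0 := fun k m hkm =>
    Lagrange.eval_basis_of_ne hkm (mem_univ m)
  have h1 := hquad Lj i hi0 hiJ hdegLj
  have h2 := hquad Li j hj0 hjJ hdegLi
  rw [← h1, ← h2]
  rw [poly_ibp _ _ _ _ (hvanish i 0 hi0) (hvanish i _ hiJ),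
    poly_ibp _ _ _ _ (hvanish j 0 hj0) (hvanish j _ hjJ)]
  rw [mul_comm (derivative Lj) (derivative Li)]
end

section
/- With the notation of the previous statement, let A be the (J−1)×(J−1) matrix with entries A_{ij} = L_j''(x_i) (the collocation second-derivative matrix with homogeneous Dirichlet boundary conditions). Then for every nonzero vector β ∈ ℝ^{J−1}, β^T D² A β < 0, where D² = diag(α_1,...,α_{J−1}); consequently D A D^{-1} is symmetric negative definite and all eigenvalues of A are real and negative. -/
/-!
Let `p = ∑ⱼ βⱼ Lⱼ` (`j` over the interior nodes) interpolate `β` there and vanish at both end nodes.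
The rule is exact on `p'' * p` (degree `2J - 2`), so integrating by parts,
`βᵀ D² A β = ∑ₖ αₖ p''(xₖ) p(xₖ) = ∫ p'' p = -∫ (p')² < 0`; the same computation with two
Lagrange basis polynomials shows `D² A` is symmetric. Hence `-D² A` is positive definite, and so
is its congruent `-D A D⁻¹ = D⁻¹ (-D² A) D⁻¹`. For a complex eigenpair `A v = μ v`,
`v* (-D² A) v = -μ v* D² v` with both forms positive, so `μ < 0`.
-/

open Finset Polynomial Matrix

/-- The `i`-th interior node index: `i ↦ i+1` as an element of `Fin (J+1)`. -/
def interiorIdx (J : ℕ) (i : Fin (J-1)) : Fin (J+1) :=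
  ⟨i.1 + 1, by have := i.2; omega⟩

namespace Matrix

variable {n : Type*} [Fintype n]

theorem posDef_neg_of_isSymm {M : Matrix n n ℝ} (hsym : M.IsSymm)
    (hneg : ∀ β : n → ℝ, β ≠ 0 → β ⬝ᵥ M *ᵥ β < 0) : (-M).PosDef :=
  .of_dotProduct_mulVec_pos (isHermitian_iff_isSymm.mpr hsym.neg) fun β hβ => by
    simpa [neg_mulVec] using hneg β hβ

open scoped ComplexOrder in
theorem PosDef.map_complexOfReal {M : Matrix n n ℝ} (hM : M.PosDef) :
    (M.map ((↑) : ℝ → ℂ)).PosDef := by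
  have hH : (M.map ((↑) : ℝ → ℂ)).IsHermitian :=
    hM.isHermitian.map _ fun r => (Complex.conj_ofReal r).symm
  refine .of_dotProduct_mulVec_pos hH fun v hv => Complex.pos_iff.mpr
    ⟨?_, (hH.im_star_dotProduct_mulVec_self v).symm⟩
  set u : n → ℝ := fun i => (v i).re
  set w : n → ℝ := fun i => (v i).im
  have hre : (star v ⬝ᵥ M.map (↑) *ᵥ v).re = u ⬝ᵥ M *ᵥ u + w ⬝ᵥ M *ᵥ w := by
    simp only [dotProduct, mulVec, Complex.re_sum, mul_sum, ← sum_add_distrib]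
    refine sum_congr rfl fun i _ => sum_congr rfl fun j _ => ?_
    simp [u, w, Complex.mul_re, Complex.mul_im]
  have hu : 0 ≤ u ⬝ᵥ M *ᵥ u := by simpa using hM.posSemidef.dotProduct_mulVec_nonneg u
  have hw : 0 ≤ w ⬝ᵥ M *ᵥ w := by simpa using hM.posSemidef.dotProduct_mulVec_nonneg w
  have huw : u ≠ 0 ∨ w ≠ 0 := by
    by_contra! h
    exact hv (funext fun i => Complex.ext (congrFun h.1 i) (congrFun h.2 i))
  rw [hre]
  rcases huw with h | h
  · linarith [show 0 < u ⬝ᵥ M *ᵥ u by simpa using hM.dotProduct_mulVec_pos h]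
  · linarith [show 0 < w ⬝ᵥ M *ᵥ w by simpa using hM.dotProduct_mulVec_pos h]

variable [DecidableEq n]

theorem PosDef.neg_diagonal_sqrt_mul_mul_inv {w : n → ℝ} (hw : ∀ i, 0 < w i)
    {A : Matrix n n ℝ} (hA : (-(diagonal w * A)).PosDef) :
    (-(diagonal (fun i => √(w i)) * A * (diagonal (fun i => √(w i)))⁻¹)).PosDef := by
  have hs : ∀ i, √(w i) ≠ 0 := fun i => (Real.sqrt_pos.mpr (hw i)).ne'
  have hDinv : (diagonal (fun i => √(w i)))⁻¹ = diagonal (fun i => (√(w i))⁻¹) :=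
    inv_eq_right_inv <| by simp [diagonal_mul_diagonal, hs]
  have hsqrt : (fun i => (√(w i))⁻¹ * w i) = fun i => √(w i) := by
    simp only [inv_mul_eq_div, Real.div_sqrt]
  have hU : IsUnit (diagonal (fun i => (√(w i))⁻¹)) :=
    isUnit_diagonal.mpr <| Pi.isUnit_iff.mpr fun i => (inv_ne_zero (hs i)).isUnit
  rw [← hU.posDef_star_left_conjugate_iff, star_eq_conjTranspose, diagonal_conjTranspose] at hA
  simpa only [hDinv, mul_neg, neg_mul, ← mul_assoc, diagonal_mul_diagonal, star_trivial,
    hsqrt] using hA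

open scoped ComplexOrder in
theorem neg_of_mem_spectrum_of_posDef_neg_diagonal_mul {w : n → ℝ} (hw : ∀ i, 0 < w i)
    {A : Matrix n n ℝ} (hA : (-(diagonal w * A)).PosDef) {μ : ℂ}
    (hμ : μ ∈ spectrum ℂ (A.map ((↑) : ℝ → ℂ))) : μ < 0 := by
  rw [← spectrum_toLin', ← Module.End.hasEigenvalue_iff_mem_spectrum] at hμ
  obtain ⟨v, hv⟩ := hμ.exists_hasEigenvector
  have hAv : A.map (↑) *ᵥ v = μ • v := by simpa using hv.apply_eq_smul
  have hW : (diagonal (fun i => (w i : ℂ))).PosDef := by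
    simpa using (PosDef.diagonal (fun i => hw i)).map_complexOfReal
  have hmap : (-(diagonal w * A)).map (↑) = -(diagonal (fun i => (w i : ℂ)) * A.map (↑)) := by
    ext i j
    simp [diagonal_mul]
  have hform : star v ⬝ᵥ (-(diagonal w * A)).map (↑) *ᵥ v =
      -μ * (star v ⬝ᵥ diagonal (fun i => (w i : ℂ)) *ᵥ v) := by
    rw [hmap, neg_mulVec, ← mulVec_mulVec, hAv, mulVec_smul, dotProduct_neg, dotProduct_smul,
      smul_eq_mul, neg_mul]
  have hpos := hA.map_complexOfReal.dotProduct_mulVec_pos hv.2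
  rw [hform] at hpos
  exact neg_pos.mp (pos_of_mul_pos_left hpos (hW.dotProduct_mulVec_pos hv.2).le)

end Matrix

namespace Lagrange

variable {ι F : Type*} [Fintype ι] [DecidableEq ι] [Field F] {v : ι → F}

theorem sum_mul_eval_basis (hv : Function.Injective v) (g : ι → F) (m : ι) :
    ∑ k, g k * (Lagrange.basis univ v m).eval (v k) = g m := by
  rw [sum_eq_single m (fun k _ hk => by rw [eval_basis_of_ne hk.symm (mem_univ k), mul_zero])
    (fun h => absurd (mem_univ m) h), eval_basis_self hv.injOn (mem_univ m), mul_one]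

theorem natDegree_basis_univ_fin {J : ℕ} {x : Fin (J+1) → F} (hx : Function.Injective x)
    (k : Fin (J+1)) : (Lagrange.basis univ x k).natDegree = J := by
  simp [natDegree_basis hx.injOn (mem_univ k)]

end Lagrange

namespace Polynomial

theorem integral_eval_derivative_derivative_mul (u w : ℝ[X]) {a b : ℝ}
    (ha : w.eval a = 0) (hb : w.eval b = 0) :
    ∫ t in a..b, u.derivative.derivative.eval t * w.eval t =
      -∫ t in a..b, u.derivative.eval t * w.derivative.eval t := by
  have h := intervalIntegral.integral_deriv_mul_eq_sub (a := a) (b := b)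
    (fun t _ => u.derivative.hasDerivAt t) (fun t _ => w.hasDerivAt t)
    (u.derivative.derivative.continuous.intervalIntegrable _ _)
    (w.derivative.continuous.intervalIntegrable _ _)
  rw [intervalIntegral.integral_add (Continuous.intervalIntegrable (by fun_prop) _ _)
    (Continuous.intervalIntegrable (by fun_prop) _ _), ha, hb] at h
  linarith

theorem integral_eval_mul_self_pos {g : ℝ[X]} (hg : g ≠ 0) {a b : ℝ} (hab : a < b) :
    0 < ∫ t in a..b, g.eval t * g.eval t := by
  obtain ⟨c, hc, hgc⟩ := ((Set.Icc_infinite hab).sdiff (g.finite_setOfPred_isRoot hg)).nonempty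
  exact intervalIntegral.integral_pos hab (by fun_prop) (fun t _ => mul_self_nonneg _)
    ⟨c, hc, mul_self_pos.mpr hgc⟩

end Polynomial

section interiorIdx
variable {J : ℕ}

theorem interiorIdx_injective : Function.Injective (interiorIdx J) := fun i j h => by
  simpa [interiorIdx, Fin.ext_iff] using h

theorem zero_lt_interiorIdx (i : Fin (J-1)) : 0 < interiorIdx J i := by
  simp [interiorIdx, Fin.lt_def]

theorem interiorIdx_lt_last (i : Fin (J-1)) : interiorIdx J i < Fin.last J := by
  simp only [interiorIdx, Fin.lt_def, Fin.val_last]; omega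

theorem exists_interiorIdx_eq {k : Fin (J+1)} (h0 : k ≠ 0) (hlast : k ≠ Fin.last J) :
    ∃ i, interiorIdx J i = k := by
  rw [Ne, Fin.ext_iff, Fin.val_zero] at h0
  rw [Ne, Fin.ext_iff, Fin.val_last] at hlast
  exact ⟨⟨k - 1, by omega⟩, Fin.ext (by simp only [interiorIdx]; omega)⟩

theorem sum_eq_sum_interiorIdx {M : Type*} [AddCommMonoid M] {f : Fin (J+1) → M}
    (h0 : f 0 = 0) (hlast : f (Fin.last J) = 0) :
    ∑ k, f k = ∑ i, f (interiorIdx J i) := by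
  refine (sum_of_injOn _ interiorIdx_injective.injOn (fun _ _ => mem_univ _) ?_
    fun _ _ => rfl).symm
  intro k _ hk
  by_cases hk0 : k = 0
  · rwa [hk0]
  by_cases hkl : k = Fin.last J
  · rwa [hkl]
  obtain ⟨i, rfl⟩ := exists_interiorIdx_eq hk0 hkl
  exact absurd (Set.mem_image_of_mem _ (mem_coe.mpr (mem_univ i))) hk

end interiorIdx

section GaussLobatto

variable {J : ℕ} {x : Fin (J+1) → ℝ}

def IsGaussLobattoRule (x α : Fin (J+1) → ℝ) : Prop :=
  ∀ P : ℝ[X], P.natDegree ≤ 2*J - 1 →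
    (∫ t in (x 0)..(x (Fin.last J)), P.eval t) = ∑ k : Fin (J+1), α k * P.eval (x k)

noncomputable def collocationMatrix (x : Fin (J+1) → ℝ) : Matrix (Fin (J-1)) (Fin (J-1)) ℝ :=
  of fun i j => (Lagrange.basis univ x (interiorIdx J j)).derivative.derivative.eval
    (x (interiorIdx J i))

noncomputable def interiorInterpolant (x : Fin (J+1) → ℝ) (β : Fin (J-1) → ℝ) : ℝ[X] :=
  ∑ j, C (β j) * Lagrange.basis univ x (interiorIdx J j)

theorem IsGaussLobattoRule.sum_mul_eval_derivative_derivative_mul {α : Fin (J+1) → ℝ}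
    (hq : IsGaussLobattoRule x α) {u w : ℝ[X]} (hu : u.natDegree ≤ J) (hw : w.natDegree ≤ J)
    (hw0 : w.eval (x 0) = 0) (hwJ : w.eval (x (Fin.last J)) = 0) :
    ∑ k, α k * u.derivative.derivative.eval (x k) * w.eval (x k) =
      -∫ t in (x 0)..(x (Fin.last J)), u.derivative.eval t * w.derivative.eval t := by
  have hdeg : (u.derivative.derivative * w).natDegree ≤ 2*J - 1 := by
    have h1 := natDegree_derivative_le u
    have h2 := natDegree_derivative_le u.derivative
    exact natDegree_mul_le.trans (by omega)
  rw [← integral_eval_derivative_derivative_mul u w hw0 hwJ]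
  simp only [mul_assoc, ← eval_mul]
  exact (hq _ hdeg).symm

theorem IsGaussLobattoRule.isSymm_diagonal_mul_collocationMatrix (hx : StrictMono x)
    {α : Fin (J+1) → ℝ} (hq : IsGaussLobattoRule x α) :
    (diagonal (fun i => α (interiorIdx J i)) * collocationMatrix x).IsSymm := by
  have hdeg := fun k => (Lagrange.natDegree_basis_univ_fin hx.injective k).le
  have hentry : ∀ i j, α (interiorIdx J i) * collocationMatrix x i j =
      -∫ t in (x 0)..(x (Fin.last J)),
        (Lagrange.basis univ x (interiorIdx J j)).derivative.eval t *
          (Lagrange.basis univ x (interiorIdx J i)).derivative.eval t := fun i j => by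
    rw [← hq.sum_mul_eval_derivative_derivative_mul (hdeg _) (hdeg _)
      (Lagrange.eval_basis_of_ne (zero_lt_interiorIdx i).ne' (mem_univ _))
      (Lagrange.eval_basis_of_ne (interiorIdx_lt_last i).ne (mem_univ _)),
      Lagrange.sum_mul_eval_basis hx.injective]
    rfl
  ext i j
  simp only [transpose_apply, diagonal_mul, hentry, mul_comm]

theorem natDegree_interiorInterpolant_le (hx : Function.Injective x) (β : Fin (J-1) → ℝ) :
    (interiorInterpolant x β).natDegree ≤ J :=
  natDegree_sum_le_of_forall_le _ _ fun _ _ =>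
    (natDegree_C_mul_le _ _).trans (Lagrange.natDegree_basis_univ_fin hx _).le

theorem eval_interiorInterpolant_interiorIdx (hx : Function.Injective x) (β : Fin (J-1) → ℝ)
    (i : Fin (J-1)) : (interiorInterpolant x β).eval (x (interiorIdx J i)) = β i := by
  rw [interiorInterpolant, eval_finsetSum, sum_eq_single i
    (fun j _ hji => by rw [eval_mul, Lagrange.eval_basis_of_ne (interiorIdx_injective.ne hji)
      (mem_univ _), mul_zero]) (fun h => absurd (mem_univ i) h),
    eval_mul, Lagrange.eval_basis_self hx.injOn (mem_univ _), eval_C, mul_one]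

theorem eval_interiorInterpolant_of_ne {k : Fin (J+1)} (hk : ∀ j, interiorIdx J j ≠ k)
    (β : Fin (J-1) → ℝ) : (interiorInterpolant x β).eval (x k) = 0 := by
  simp [interiorInterpolant, eval_finsetSum, Lagrange.eval_basis_of_ne (hk _)]

theorem eval_derivative_derivative_interiorInterpolant (β : Fin (J-1) → ℝ) (i : Fin (J-1)) :
    (interiorInterpolant x β).derivative.derivative.eval (x (interiorIdx J i)) =
      (collocationMatrix x *ᵥ β) i := by
  simp [interiorInterpolant, eval_finsetSum, mulVec, dotProduct, collocationMatrix, mul_comm]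

theorem derivative_interiorInterpolant_ne_zero (hx : Function.Injective x) {β : Fin (J-1) → ℝ}
    (hβ : β ≠ 0) : (interiorInterpolant x β).derivative ≠ 0 := by
  intro h
  obtain ⟨i, hi⟩ := Function.ne_iff.mp hβ
  obtain ⟨c, hc⟩ := natDegree_eq_zero.mp (derivative_eq_zero.mp h)
  have h0 := eval_interiorInterpolant_of_ne (x := x) (fun j => (zero_lt_interiorIdx j).ne') β
  have hi' := eval_interiorInterpolant_interiorIdx hx β i
  rw [← hc, eval_C] at h0 hi'
  exact hi (hi'.symm.trans h0)

theorem IsGaussLobattoRule.dotProduct_diagonal_mul_collocationMatrix_mulVec (hx : StrictMono x)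
    {α : Fin (J+1) → ℝ} (hq : IsGaussLobattoRule x α) (β : Fin (J-1) → ℝ) :
    β ⬝ᵥ (diagonal (fun i => α (interiorIdx J i)) * collocationMatrix x) *ᵥ β =
      -∫ t in (x 0)..(x (Fin.last J)),
        (interiorInterpolant x β).derivative.eval t *
          (interiorInterpolant x β).derivative.eval t := by
  have h0 := eval_interiorInterpolant_of_ne (x := x) (fun j => (zero_lt_interiorIdx j).ne') β
  have hlast := eval_interiorInterpolant_of_ne (x := x) (fun j => (interiorIdx_lt_last j).ne) β
  have hdeg := natDegree_interiorInterpolant_le hx.injective β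
  rw [← hq.sum_mul_eval_derivative_derivative_mul hdeg hdeg h0 hlast,
    sum_eq_sum_interiorIdx (by rw [h0, mul_zero]) (by rw [hlast, mul_zero])]
  simp only [eval_derivative_derivative_interiorInterpolant,
    eval_interiorInterpolant_interiorIdx hx.injective, dotProduct, ← mulVec_mulVec,
    mulVec_diagonal]
  exact sum_congr rfl fun i _ => by ring

theorem IsGaussLobattoRule.dotProduct_diagonal_mul_collocationMatrix_mulVec_neg
    (hx : StrictMono x) {α : Fin (J+1) → ℝ} (hq : IsGaussLobattoRule x α) {β : Fin (J-1) → ℝ}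
    (hβ : β ≠ 0) :
    β ⬝ᵥ (diagonal (fun i => α (interiorIdx J i)) * collocationMatrix x) *ᵥ β < 0 := by
  obtain ⟨i, -⟩ := Function.ne_iff.mp hβ
  rw [hq.dotProduct_diagonal_mul_collocationMatrix_mulVec hx, neg_lt_zero]
  exact integral_eval_mul_self_pos (derivative_interiorInterpolant_ne_zero hx.injective hβ)
    ((hx (zero_lt_interiorIdx i)).trans (hx (interiorIdx_lt_last i)))

end GaussLobatto

theorem collocation_matrix_negative_general (J : ℕ)
    (x : Fin (J+1) → ℝ) (hx : StrictMono x)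
    (α : Fin (J+1) → ℝ) (hα : ∀ k, 0 < α k)
    (hexact : ∀ P : Polynomial ℝ, P.natDegree ≤ 2*J - 1 →
      (∫ t in (x 0)..(x (Fin.last J)), P.eval t) = ∑ k : Fin (J+1), α k * P.eval (x k))
    (A : Matrix (Fin (J-1)) (Fin (J-1)) ℝ)
    (hA : ∀ i j, A i j =
      (derivative (derivative (Lagrange.basis univ x (interiorIdx J j)))).eval
        (x (interiorIdx J i))) :
    (∀ β : Fin (J-1) → ℝ, β ≠ 0 →
        β ⬝ᵥ (Matrix.diagonal (fun i => α (interiorIdx J i)) * A).mulVec β < 0) ∧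
      ((Matrix.diagonal (fun i => Real.sqrt (α (interiorIdx J i))) * A *
          (Matrix.diagonal (fun i => Real.sqrt (α (interiorIdx J i))))⁻¹).IsSymm ∧
        (-(Matrix.diagonal (fun i => Real.sqrt (α (interiorIdx J i))) * A *
          (Matrix.diagonal (fun i => Real.sqrt (α (interiorIdx J i))))⁻¹)).PosDef) ∧
      ∀ μ ∈ spectrum ℂ (A.map (Complex.ofReal)), μ.im = 0 ∧ μ.re < 0 := by
  obtain rfl : A = collocationMatrix x := Matrix.ext hA
  have hq : IsGaussLobattoRule x α := hexact
  have hneg := fun β (hβ : β ≠ 0) =>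
    hq.dotProduct_diagonal_mul_collocationMatrix_mulVec_neg hx hβ
  have hM := posDef_neg_of_isSymm (hq.isSymm_diagonal_mul_collocationMatrix hx) hneg
  have hS := hM.neg_diagonal_sqrt_mul_mul_inv (fun i => hα _)
  refine ⟨hneg, ⟨?_, hS⟩, fun μ hμ => ?_⟩
  · simpa using (isHermitian_iff_isSymm.mp hS.isHermitian).neg
  · exact (Complex.neg_iff.mp
      (neg_of_mem_spectrum_of_posDef_neg_diagonal_mul (fun i => hα _) hM hμ)).symm

/-- Negative definiteness of the Gauss–Lobatto collocation second-derivative matrix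
with homogeneous Dirichlet boundary conditions: with nodes `x₀ < … < x_J`, positive
weights `α`, quadrature exact for degree ≤ 2J−1, and
`A_{ij} = L_j''(x_i)` (interior indices), one has `βᵀ D² A β < 0` for every `β ≠ 0`
(`D² = diag(α₁,…,α_{J−1})`); consequently `D A D⁻¹` is symmetric negative definite and
all eigenvalues of `A` are real and negative. -/
theorem collocation_matrix_negative (J : ℕ) (hJ : 2 ≤ J)
    (x : Fin (J+1) → ℝ) (hx : StrictMono x)
    (α : Fin (J+1) → ℝ) (hα : ∀ k, 0 < α k)
    (hexact : ∀ P : Polynomial ℝ, P.natDegree ≤ 2*J - 1 →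
      (∫ t in (x 0)..(x (Fin.last J)), P.eval t) = ∑ k : Fin (J+1), α k * P.eval (x k))
    (A : Matrix (Fin (J-1)) (Fin (J-1)) ℝ)
    (hA : ∀ i j, A i j =
      (derivative (derivative (Lagrange.basis univ x (interiorIdx J j)))).eval
        (x (interiorIdx J i))) :
    (∀ β : Fin (J-1) → ℝ, β ≠ 0 →
        β ⬝ᵥ (Matrix.diagonal (fun i => α (interiorIdx J i)) * A).mulVec β < 0) ∧
      ((Matrix.diagonal (fun i => Real.sqrt (α (interiorIdx J i))) * A *
          (Matrix.diagonal (fun i => Real.sqrt (α (interiorIdx J i))))⁻¹).IsSymm ∧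
        (-(Matrix.diagonal (fun i => Real.sqrt (α (interiorIdx J i))) * A *
          (Matrix.diagonal (fun i => Real.sqrt (α (interiorIdx J i))))⁻¹)).PosDef) ∧
      ∀ μ ∈ spectrum ℂ (A.map (Complex.ofReal)), μ.im = 0 ∧ μ.re < 0 :=
  collocation_matrix_negative_general J x hx α hα hexact A hA
end
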